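/- arXiv:2004.02610 — 5 statements merged into one kernel-verified Lean document; each statement's English description precedes it below -/
import Mathlib

section
/- If a reward sequence satisfies R_k ≥ r_g > 0 whenever k is a multiple of a fixed period p ≥ 1, and R_k ≥ -M otherwise (with M ≥ 0), then the discounted return Σ_{k=0}^∞ γ^k R_k is at least r_g/(1-γ^p) - M/(1-γ). -/
lemma tsum_indicator_multiples (γ : ℝ) (hγ0 : 0 < γ) (hγ1 : γ < 1) (p : ℕ) (hp : 1 ≤ p) :
    ∑' k : ℕ, (if p ∣ k then γ ^ k else 0) = (1 - γ ^ p)⁻¹ := by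
  have hinj : Function.Injective (fun n : ℕ => p * n) := by
    intro a b h
    simp only at h
    exact Nat.eq_of_mul_eq_mul_left (by omega) h
  have hsupp : Function.support (fun k : ℕ => if p ∣ k then γ ^ k else 0) ⊆
      Set.range (fun n : ℕ => p * n) := by
    intro k hk
    simp only [Function.mem_support, ne_eq, ite_eq_right_iff, not_forall] at hk
    obtain ⟨⟨c, hc⟩, -⟩ := hk
    exact ⟨c, hc.symm⟩
  have heq := hinj.tsum_eq hsupp
  rw [← heq]
  have hγp1 : γ ^ p < 1 := pow_lt_one₀ hγ0.le hγ1 (by omega)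
  have hpt : ∀ n : ℕ, (if p ∣ p * n then γ ^ (p * n) else 0) = (γ ^ p) ^ n := by
    intro n
    rw [if_pos (Dvd.intro n rfl), pow_mul]
  simp only [hpt]
  exact tsum_geometric_of_lt_one (by positivity) hγp1

/-- If the reward is at least `r_g` at every multiple of a period `p ≥ 1` and at
least `-M` otherwise, the discounted return is at least
`r_g / (1 - γ^p) - M / (1 - γ)`. -/
theorem discounted_return_periodic_lower_bound
    (γ : ℝ) (hγ0 : 0 < γ) (hγ1 : γ < 1)
    (p : ℕ) (hp : 1 ≤ p) (rg M : ℝ) (hrg : 0 < rg) (hM : 0 ≤ M)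
    (R : ℕ → ℝ)
    (hRacc : ∀ k, p ∣ k → rg ≤ R k)
    (hRother : ∀ k, ¬ p ∣ k → -M ≤ R k)
    (hSum : Summable (fun k => γ ^ k * R k)) :
    rg / (1 - γ ^ p) - M / (1 - γ) ≤ ∑' k, γ ^ k * R k := by
  have hγp1 : γ ^ p < 1 := pow_lt_one₀ hγ0.le hγ1 (by omega)
  have h1γ : 0 < 1 - γ := by linarith
  have h1γp : 0 < 1 - γ ^ p := by linarith
  have hgeo : Summable (fun k : ℕ => γ ^ k) :=
    summable_geometric_of_lt_one hγ0.le hγ1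
  have hindS : Summable (fun k : ℕ => if p ∣ k then γ ^ k else 0) := by
    apply Summable.of_nonneg_of_le (fun k => ?_) (fun k => ?_) hgeo
    · split <;> positivity
    · split
      · exact le_rfl
      · positivity
  set g : ℕ → ℝ :=
    fun k => (rg + M) * (if p ∣ k then γ ^ k else 0) - M * γ ^ k with hg
  have hgS : Summable g := ((hindS.mul_left _).sub (hgeo.mul_left _))
  have hle : ∀ k, g k ≤ γ ^ k * R k := by
    intro k
    have hγk : (0:ℝ) ≤ γ ^ k := by positivity
    by_cases hd : p ∣ k
    · have := hRacc k hd
      simp only [hg, if_pos hd]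
      nlinarith
    · have := hRother k hd
      simp only [hg, if_neg hd]
      nlinarith
  have htg : ∑' k, g k = (rg + M) * (1 - γ ^ p)⁻¹ - M * (1 - γ)⁻¹ := by
    rw [hg, Summable.tsum_sub (hindS.mul_left _) (hgeo.mul_left _),
      tsum_mul_left, tsum_mul_left,
      tsum_indicator_multiples γ hγ0 hγ1 p hp,
      tsum_geometric_of_lt_one hγ0.le hγ1]
  have hmain : ∑' k, g k ≤ ∑' k, γ ^ k * R k := Summable.tsum_le_tsum hle hgS hSum
  rw [htg] at hmain
  have hMnn : 0 ≤ M * (1 - γ ^ p)⁻¹ := by positivity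
  have : rg / (1 - γ ^ p) - M / (1 - γ) ≤ (rg + M) * (1 - γ ^ p)⁻¹ - M * (1 - γ)⁻¹ := by
    rw [div_eq_mul_inv, div_eq_mul_inv, add_mul]
    linarith
  linarith
end

section
/- For any constants r_g > 0, M ≥ 0, C > 0, p ≥ 1 and any probability p₂ ∈ (0,1], there exists γ* ∈ (0,1) such that for all γ ∈ (γ*, 1): p₂·(r_g·γ^p/(1-γ^p) - M/(1-γ)) - (1-p₂)·M/(1-γ) > r_g·C. -/
set_option maxHeartbeats 1000000 in
/-- The key inequality of the reward-shaping theorem: for a sufficiently large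
reward `r_g'` and discount factors close enough to `1`, the lower bound on the
value of a policy satisfying the specification with probability `p₂ > 0`
exceeds the upper bound `r_g'·C` on the value of a non-satisfying policy. -/
theorem reward_shaping_key_inequality
    (rg M C : ℝ) (p : ℕ) (p₂ : ℝ)
    (hrg : 0 < rg) (hM : 0 ≤ M) (hC : 0 < C) (hp : 1 ≤ p)
    (hp₂0 : 0 < p₂) (hp₂1 : p₂ ≤ 1) :
    ∃ γstar ∈ Set.Ioo (0 : ℝ) 1, ∃ rg' ≥ rg,
      ∀ γ ∈ Set.Ioo γstar 1,
        p₂ * (rg' * γ ^ p / (1 - γ ^ p) - M / (1 - γ))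
            - (1 - p₂) * (M / (1 - γ)) > rg' * C := by
  set P : ℝ := (p : ℝ) with hP
  have hP1 : (1:ℝ) ≤ P := by rw [hP]; exact_mod_cast hp
  have hPpos : (0:ℝ) < P := lt_of_lt_of_le one_pos hP1
  set δ : ℝ := min (1/(2*P)) (min (p₂/(4*P*C)) (1/2)) with hδdef
  have hδpos : 0 < δ := by
    apply lt_min (by positivity) (lt_min (by positivity) (by norm_num))
  have hδhalf : δ ≤ 1/2 := le_trans (min_le_right _ _) (min_le_right _ _)
  have hδ1 : δ ≤ 1/(2*P) := min_le_left _ _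
  have hδ2 : δ ≤ p₂/(4*P*C) := le_trans (min_le_right _ _) (min_le_left _ _)
  refine ⟨1 - δ, ⟨by linarith, by linarith⟩, max rg (4*P*M/p₂), le_max_left _ _, ?_⟩
  set rg' : ℝ := max rg (4*P*M/p₂) with hrg'def
  have hrg'pos : 0 < rg' := lt_of_lt_of_le hrg (le_max_left _ _)
  have hrgM : 4*P*M/p₂ ≤ rg' := le_max_right _ _
  have hrgM' : 4*P*M ≤ p₂ * rg' := by
    have := (div_le_iff₀ hp₂0).mp hrgM
    nlinarith
  rintro γ ⟨hγl, hγu⟩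
  have ha : 0 < 1 - γ := by linarith
  have haδ : 1 - γ < δ := by linarith
  have hγ0 : (0:ℝ) < γ := by linarith
  have hbern : 1 + P*(γ-1) ≤ γ^p := by
    have h := one_add_mul_le_pow (by linarith : (-2:ℝ) ≤ γ - 1) p
    have : 1 + γ - 1 = γ := by ring
    simpa [this] using h
  have hγp_half : (1:ℝ)/2 ≤ γ^p := by
    have h1 : 1 - γ < 1/(2*P) := lt_of_lt_of_le haδ hδ1
    have h2 : P*(1-γ) < 1/2 := by
      have := mul_lt_mul_of_pos_left h1 hPpos
      calc P*(1-γ) < P*(1/(2*P)) := this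
        _ = 1/2 := by field_simp
    nlinarith
  have hγp1 : γ^p < 1 := pow_lt_one₀ (le_of_lt hγ0) hγu (by omega)
  have hb : 0 < 1 - γ^p := by linarith
  have hbP : 1 - γ^p ≤ P*(1-γ) := by nlinarith
  have hγpn : (0:ℝ) ≤ γ^p := by positivity
  have hnum : 0 ≤ p₂ * (rg' * γ^p) := mul_nonneg hp₂0.le (mul_nonneg hrg'pos.le hγpn)
  have h1 : p₂ * (rg' * γ^p) / (P*(1-γ)) ≤ p₂ * (rg' * γ^p) / (1 - γ^p) :=
    div_le_div_of_nonneg_left hnum hb hbP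
  have key : rg' * C < p₂ * (rg' * γ^p) / (P*(1-γ)) - M/(1-γ) := by
    have heq : p₂ * (rg' * γ^p) / (P*(1-γ)) - M/(1-γ)
        = (p₂ * (rg' * γ^p) / P - M) / (1-γ) := by
      field_simp
    have hPC : (1-γ)*(4*P*C) < p₂ := by
      have h := lt_of_lt_of_le haδ hδ2
      exact (lt_div_iff₀ (by positivity)).mp h
    rw [heq, lt_div_iff₀ ha, lt_sub_iff_add_lt, lt_div_iff₀ hPpos]
    nlinarith [mul_lt_mul_of_pos_left hPC hrg'pos,
      mul_le_mul_of_nonneg_left hγp_half (mul_pos hp₂0 hrg'pos).le]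
  have hsplit : p₂ * (rg' * γ ^ p / (1 - γ ^ p) - M / (1 - γ))
      - (1 - p₂) * (M / (1 - γ))
      = p₂ * (rg' * γ^p) / (1 - γ^p) - M / (1 - γ) := by
    field_simp
    ring
  rw [gt_iff_lt, hsplit]
  linarith
end

section
/- If q is a trap state (g*(q) = 0 at the fixed point of the backward-marking algorithm), then no run of the automaton starting from q contains any accepting transition; in particular no run through q is accepting. -/
/-!
The marking operator `T` is monotone and inflationary on the finite lattice `Q → Bool`, so the
iterates of `g₀` increase and, since every strict step marks a new state, become a fixed point
after at most `|Q|` steps. At a fixed point a state with a marked successor is marked itself, so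
the unmarked states are closed under transitions: a run from a trap state never leaves them. But
every source of an accepting transition is marked already by `g₀`.
-/

open Function Finset

theorem Finset.exists_le_card_eq_succ_of_monotone {α : Type*} [Fintype α] {s : ℕ → Finset α}
    (hs : Monotone s) : ∃ n ≤ Fintype.card α, s n = s (n + 1) := by
  by_contra! hne
  have growth : ∀ n ≤ Fintype.card α + 1, n ≤ #(s n) := by
    intro n hn
    induction n with
    | zero => exact Nat.zero_le _
    | succ n ih =>
      have hlt : s n < s (n + 1) := (hs n.le_succ).lt_of_ne (hne n (by omega))
      exact (ih (by omega)).trans_lt (card_lt_card hlt)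
  have hbound := (growth _ le_rfl).trans (card_le_univ _)
  omega

theorem exists_le_card_isFixedPt_iterate {α : Type*} [Fintype α]
    {f : (α → Bool) → (α → Bool)} (hf : Monotone f) {x : α → Bool} (hx : x ≤ f x) :
    ∃ n ≤ Fintype.card α, IsFixedPt f (f^[n] x) := by
  classical
  have hs : Monotone fun n => ({p | f^[n] x p} : Finset α) := fun m n hmn p hp => by
    simp only [mem_filter, mem_univ, true_and] at hp ⊢
    exact Bool.le_iff_imp.mp (hf.monotone_iterate_of_le_map hx hmn p) hp
  obtain ⟨n, hn, hsn⟩ := Finset.exists_le_card_eq_succ_of_monotone hs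
  refine ⟨n, hn, funext fun p => ?_⟩
  have hmem := congrArg (p ∈ ·) hsn
  simp only [mem_filter, mem_univ, true_and, eq_iff_iff] at hmem
  rw [← iterate_succ_apply' f n x]
  exact Bool.eq_iff_iff.mpr hmem.symm

theorem isFixedPt_iterate_card {α : Type*} [Fintype α]
    {f : (α → Bool) → (α → Bool)} (hf : Monotone f) {x : α → Bool} (hx : x ≤ f x) :
    IsFixedPt f (f^[Fintype.card α] x) := by
  obtain ⟨n, hn, hfix⟩ := exists_le_card_isFixedPt_iterate hf hx
  rwa [← Nat.sub_add_cancel hn, iterate_add_apply, (hfix.iterate _).eq]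

def IsBackwardMarking {Q Sig : Type*} (δ : Q → Sig → Set Q)
    (T : (Q → Bool) → (Q → Bool)) : Prop :=
  ∀ g q, T g q = true ↔ (g q = true ∨ ∃ σ, ∃ q' ∈ δ q σ, g q' = true)

namespace IsBackwardMarking

variable {Q Sig : Type*} {δ : Q → Sig → Set Q} {T : (Q → Bool) → (Q → Bool)}

theorem le_map (hT : IsBackwardMarking δ T) (g : Q → Bool) : g ≤ T g :=
  fun p => Bool.le_iff_imp.mpr fun hp => (hT g p).mpr (Or.inl hp)

theorem monotone (hT : IsBackwardMarking δ T) : Monotone T := by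
  intro g h hgh p
  rw [Bool.le_iff_imp, hT, hT]
  rintro (hp | ⟨σ, q', hq', hq'g⟩)
  · exact Or.inl (Bool.le_iff_imp.mp (hgh p) hp)
  · exact Or.inr ⟨σ, q', hq', Bool.le_iff_imp.mp (hgh q') hq'g⟩

theorem run_unmarked_of_map_le (hT : IsBackwardMarking δ T) {g : Q → Bool} (hg : T g ≤ g)
    {run : ℕ → Q} {σs : ℕ → Sig} (hrun : ∀ k, run (k + 1) ∈ δ (run k) (σs k))
    (h0 : g (run 0) = false) (k : ℕ) : g (run k) = false := by
  induction k with
  | zero => exact h0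
  | succ k ih =>
    rw [Bool.eq_false_iff]
    intro hk
    have hmarked : T g (run k) = true := (hT g (run k)).mpr (Or.inr ⟨σs k, _, hrun k, hk⟩)
    simpa [ih] using Bool.le_iff_imp.mp (hg (run k)) hmarked

end IsBackwardMarking

/-- If `q` is a trap state (marked `false` by the backward-marking fixed
point), then no run starting from `q` contains an accepting transition. -/
theorem trap_state_no_accepting_run
    {Q Sig : Type*} [Fintype Q] (δ : Q → Sig → Set Q)
    (F : Set (Q × Sig × Q))
    (T : (Q → Bool) → (Q → Bool))
    (hT : ∀ g q, T g q = true ↔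
      (g q = true ∨ ∃ σ, ∃ q' ∈ δ q σ, g q' = true))
    (g₀ : Q → Bool)
    (hg₀ : ∀ q, g₀ q = true ↔ ∃ σ, ∃ q' ∈ δ q σ, (q, σ, q') ∈ F)
    (q : Q)
    (htrap : (T^[Fintype.card Q] g₀) q = false)
    (run : ℕ → Q) (σs : ℕ → Sig)
    (hrun0 : run 0 = q)
    (hrun : ∀ k, run (k + 1) ∈ δ (run k) (σs k)) :
    ∀ k, (run k, σs k, run (k + 1)) ∉ F := by
  intro k hF
  have hT : IsBackwardMarking δ T := hT
  have hinfl := hT.le_map g₀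
  have hfix := isFixedPt_iterate_card hT.monotone hinfl
  have hunmarked : (T^[Fintype.card Q] g₀) (run k) = false :=
    hT.run_unmarked_of_map_le hfix.le hrun (hrun0 ▸ htrap) k
  have hsource : g₀ (run k) = true := (hg₀ (run k)).mpr ⟨σs k, _, hrun k, hF⟩
  have hmarked : (T^[Fintype.card Q] g₀) (run k) = true :=
    Bool.le_iff_imp.mp (hT.monotone.monotone_iterate_of_le_map hinfl (Nat.zero_le _) (run k))
      hsource
  simp [hunmarked] at hmarked
end

section
/- Let V ∈ {0,1}^m track visitation of m accepting sets, updated by: V[i] ← 0 when a transition in F_i is taken, and V resets to all ones when all entries are 0. If a run takes transitions in every F_i infinitely often, then V resets to all ones infinitely often. -/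
/-- If a run hits every accepting set `F i` infinitely often, then the
visitation vector `V` resets to all-ones infinitely often. -/
theorem visitation_vector_resets_infinitely
    {E : Type*} (m : ℕ) (hm : 1 ≤ m) (F : Fin m → Set E) (ξ : ℕ → E)
    (V : ℕ → Fin m → Bool) (V' : ℕ → Fin m → Bool)
    (hV0 : ∀ i, V 0 i = true)
    (hV'in : ∀ t i, ξ t ∈ F i → V' t i = false)
    (hV'out : ∀ t i, ξ t ∉ F i → V' t i = V t i)
    (hreset : ∀ t, (∀ i, V' t i = false) → ∀ i, V (t + 1) i = true)
    (hkeep : ∀ t, ¬ (∀ i, V' t i = false) → V (t + 1) = V' t)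
    (hinf : ∀ i, {t | ξ t ∈ F i}.Infinite) :
    {t | ∀ i, V' t i = false}.Infinite := by
  by_contra hfin
  rw [Set.not_infinite] at hfin
  obtain ⟨T, hT⟩ := hfin.bddAbove
  -- beyond T there is no reset
  have hno : ∀ t, T < t → ¬ (∀ i, V' t i = false) := by
    intro t ht hall
    exact absurd (hT hall) (not_le.mpr ht)
  -- once false after T, stays false
  have hVfalse : ∀ i t, T < t → V t i = false → ∀ s, t ≤ s → V s i = false := by
    intro i t ht h0 s hs
    induction s with
    | zero => omega
    | succ n ih =>
      rcases Nat.lt_or_ge n t with h | h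
      · have : t = n + 1 := by omega
        exact this ▸ h0
      · have hVn : V n i = false := ih h
        have hV'n : V' n i = false := by
          by_cases hx : ξ n ∈ F i
          · exact hV'in n i hx
          · rw [hV'out n i hx]; exact hVn
        have := hkeep n (hno n (by omega))
        rw [this]; exact hV'n
  have hV'false : ∀ i t, T < t → V t i = false → ∀ s, t ≤ s → V' s i = false := by
    intro i t ht h0 s hs
    by_cases hx : ξ s ∈ F i
    · exact hV'in s i hx
    · rw [hV'out s i hx]; exact hVfalse i t ht h0 s hs
  -- for each i, find a time > T where ξ hits F i
  have hex : ∀ i : Fin m, ∃ t, T < t ∧ V' t i = false := by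
    intro i
    obtain ⟨t, ht, hlt⟩ := (hinf i).exists_gt T
    exact ⟨t, hlt, hV'in t i ht⟩
  choose f hf1 hf2 using hex
  -- V (f i + 1) i = false
  have hVf : ∀ i, V (f i + 1) i = false := by
    intro i
    rw [hkeep (f i) (hno (f i) (hf1 i))]
    exact hf2 i
  set N := (Finset.univ : Finset (Fin m)).sup (fun i => f i + 1) with hN
  have hNT : T < N := by
    have h1 : f ⟨0, hm⟩ + 1 ≤ N := Finset.le_sup (f := fun i => f i + 1) (Finset.mem_univ _)
    have := hf1 ⟨0, hm⟩
    omega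
  have : ∀ i, V' N i = false := by
    intro i
    have hle : f i + 1 ≤ N := Finset.le_sup (f := fun i => f i + 1) (Finset.mem_univ _)
    exact hV'false i (f i + 1) (by have := hf1 i; omega) (hVf i) N hle
  exact hno N hNT this
end

section
/- If π₁ and π₂ are policies with satisfaction probabilities p₁ and p₂ from state s₀, and the value function satisfies v_{π₁}(s₀) ≥ v_{π₂}(s₀) where v_{π₁}(s₀) ≤ r_g·C whenever p₁ = 0 and v_{π₂}(s₀) ≥ p₂·(r_g·γ^k/(1-γ^k) - M/(1-γ)) - (1-p₂)·M/(1-γ), then for γ close enough to 1 and r_g large enough, p₁ = 0 implies p₂ = 0. -/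
/-- Abstract form of Theorem 1's contradiction argument: with the value bounds
`v₁ ≤ r_g·C` (when `p₁ = 0`), `v₂ ≥ p₂·r_g·γ^k/(1-γ^k) - M/(1-γ)`, and
`v₁ ≥ v₂`, for `γ` close enough to `1` and `r_g` large enough we conclude
`p₁ = 0 → p₂ = 0`. -/
theorem value_comparison_contradiction
    (C M : ℝ) (k : ℕ) (p₂ : ℝ)
    (hC : 0 < C) (hM : 0 ≤ M) (hk : 1 ≤ k)
    (hp₂0 : 0 < p₂) (hp₂1 : p₂ ≤ 1) :
    ∃ γstar ∈ Set.Ioo (0 : ℝ) 1, ∃ R₀ > (0 : ℝ),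
      ∀ γ ∈ Set.Ioo γstar 1, ∀ rg > R₀,
        ∀ p₁ v₁ v₂ : ℝ, 0 ≤ p₁ → p₁ ≤ 1 →
          (p₁ = 0 → v₁ ≤ rg * C) →
          v₂ ≥ p₂ * (rg * γ ^ k / (1 - γ ^ k)) - M / (1 - γ) →
          v₁ ≥ v₂ →
          (p₁ = 0 → p₂ = 0) := by
  have hk0 : (0 : ℝ) < k := by exact_mod_cast Nat.lt_of_lt_of_le Nat.zero_lt_one hk
  have hk1 : (1:ℝ) ≤ k := by exact_mod_cast hk
  obtain ⟨ε, hε0, hε1, hε2⟩ :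
      ∃ ε : ℝ, 0 < ε ∧ ε ≤ 1 / (2 * k) ∧ ε ≤ p₂ / (4 * k * C) :=
    ⟨min (1 / (2 * k)) (p₂ / (4 * k * C)),
      lt_min (by positivity) (by positivity), min_le_left _ _, min_le_right _ _⟩
  have hεhalf : ε < 1 := lt_of_le_of_lt hε1 (by
    rw [div_lt_one (by positivity)]; linarith)
  refine ⟨1 - ε, ⟨by linarith, by linarith⟩, 4 * k * M / p₂ + 1, by positivity,
    ?_⟩
  rintro γ ⟨hγl, hγ1⟩ rg hrg p₁ v₁ v₂ _ _ hv₁ hv₂ hv hp₁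
  exfalso
  have hγ0 : 0 < γ := by linarith
  have hγk1 : γ ^ k < 1 := pow_lt_one₀ hγ0.le hγ1 (by omega)
  have hγk0 : 0 < γ ^ k := pow_pos hγ0 k
  have h1γ : 0 < 1 - γ := by linarith
  have h1γk : 0 < 1 - γ ^ k := by linarith
  -- Bernoulli: γ^k ≥ 1 - k(1-γ)
  have hbern : 1 + (k : ℝ) * (γ - 1) ≤ γ ^ k := by
    have := one_add_mul_le_pow (a := γ - 1) (by linarith) k
    simpa using this
  have hkey1 : 1 - γ ^ k ≤ (k : ℝ) * (1 - γ) := by nlinarith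
  -- γ^k ≥ 1/2
  have hγε : 1 - γ < ε := by linarith
  have hγkhalf : (1 : ℝ) / 2 ≤ γ ^ k := by
    have : (k : ℝ) * (1 - γ) ≤ (k : ℝ) * ε := by nlinarith
    have h2 : (k : ℝ) * ε ≤ (k : ℝ) * (1 / (2 * k)) := by nlinarith
    have h3 : (k : ℝ) * (1 / (2 * k)) = 1 / 2 := by field_simp
    nlinarith
  have hrg0 : 0 < rg := by
    have : (0:ℝ) ≤ 4 * k * M / p₂ := by positivity
    linarith
  -- main chain
  have hv₁' : v₁ ≤ rg * C := hv₁ hp₁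
  -- step 1: p₂ * (rg * γ^k / (1-γ^k)) ≥ p₂ * rg * γ^k / (k*(1-γ))
  have hstep1 : p₂ * rg * γ ^ k / ((k : ℝ) * (1 - γ)) ≤ p₂ * (rg * γ ^ k / (1 - γ ^ k)) := by
    rw [show p₂ * (rg * γ ^ k / (1 - γ ^ k)) = p₂ * rg * γ ^ k / (1 - γ ^ k) by ring]
    exact div_le_div_of_nonneg_left (by positivity) h1γk hkey1
  have heq : p₂ * rg * γ ^ k / ((k : ℝ) * (1 - γ)) - M / (1 - γ)
      = (p₂ * rg * γ ^ k - (k : ℝ) * M) / ((k : ℝ) * (1 - γ)) := by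
    field_simp
  -- step 2: the numerator inequality
  have hnum : rg * C * ((k : ℝ) * (1 - γ)) < p₂ * rg * γ ^ k - (k : ℝ) * M := by
    have hεC : ε * (4 * k * C) ≤ p₂ := by
      rw [← le_div_iff₀ (by positivity : (0:ℝ) < 4 * k * C)]; exact hε2
    have hrgp : 4 * (k : ℝ) * M < rg * p₂ := by
      have h : 4 * (k : ℝ) * M / p₂ < rg := by linarith
      have h' := mul_lt_mul_of_pos_right h hp₂0
      rw [div_mul_cancel₀ _ hp₂0.ne'] at h'
      exact h'
    have hA : rg * C * ((k : ℝ) * (1 - γ)) ≤ rg * p₂ / 4 := by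
      have h1 : rg * (ε * (4 * k * C)) ≤ rg * p₂ :=
        mul_le_mul_of_nonneg_left hεC hrg0.le
      have h2 : rg * C * (k : ℝ) * (1 - γ) ≤ rg * C * (k : ℝ) * ε :=
        mul_le_mul_of_nonneg_left hγε.le (by positivity)
      linarith
    have hB : p₂ * rg / 2 ≤ p₂ * rg * γ ^ k := by
      have := mul_le_mul_of_nonneg_left hγkhalf (by positivity : (0:ℝ) ≤ p₂ * rg)
      linarith
    linarith
  have hfinal : rg * C < (p₂ * rg * γ ^ k - (k : ℝ) * M) / ((k : ℝ) * (1 - γ)) := by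
    rw [lt_div_iff₀ (by positivity)]
    exact hnum
  have hfinal' : rg * C < p₂ * rg * γ ^ k / ((k : ℝ) * (1 - γ)) - M / (1 - γ) := by
    rw [heq]; exact hfinal
  linarith [hstep1, hfinal', hv₂, hv, hv₁']
end
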